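/- arXiv:1610.04042 — 4 statements merged into one kernel-verified Lean document; each statement's English description precedes it below -/
import Mathlib

section
/- (Proposition 1, constant-objective form.) Let R : ℝ → ℝ be any function and let α : ℕ → {0,…,n} be a GOTL weight sequence whose objective is constant over the window, i.e., R_k = R for all k ∈ {k₀, k₀+1, …, k₀+n-1}. Then the grid index α_{k₀+n} is locally optimal for R. -/
/-!
Along the window the objective is fixed, and a locally optimal index never moves again, so if
`α (k₀ + n)` had a strictly better neighbour `j`, every one of the `n` steps would have been a strict
improvement. Then `α k₀, …, α (k₀ + n), j` are `n + 2` grid indices with strictly decreasing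
objective values, hence pairwise distinct — impossible on a grid of `n + 1` points.
-/

section GreedyWalk

variable {β : Type*} [Preorder β]

/-- `j ≤ n` keeps the neighbour on the grid `{0, …, n}`; `j + 1 = i` avoids truncated subtraction. -/
def HasBetterNeighbor (n : ℕ) (f : ℕ → β) (i : ℕ) : Prop :=
  ∃ j ≤ n, (j = i + 1 ∨ j + 1 = i) ∧ f j < f i

theorem le_of_strictAntiOn_comp_of_mapsTo {f : ℕ → β} {c : ℕ → ℕ} {m n : ℕ}
    (hc : ∀ i ≤ m, c i ≤ n) (hf : StrictAntiOn (f ∘ c) (Set.Iic m)) : m ≤ n := by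
  have hinj : Set.InjOn c (Finset.range (m + 1)) := fun i hi i' hi' h =>
    hf.injOn (by simpa [Nat.lt_succ_iff] using hi) (by simpa [Nat.lt_succ_iff] using hi')
      (congrArg f h)
  have hmaps : Set.MapsTo c (Finset.range (m + 1)) (Finset.range (n + 1)) := fun i hi => by
    simpa [Nat.lt_succ_iff] using hc i (by simpa [Nat.lt_succ_iff] using hi)
  simpa using Finset.card_le_card_of_injOn c hmaps hinj

variable {n m : ℕ} {f : ℕ → β} {a : ℕ → ℕ}

theorem hasBetterNeighbor_of_le_of_hasBetterNeighbor
    (hstay : ∀ i < m, ¬ HasBetterNeighbor n f (a i) → a (i + 1) = a i)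
    (hlast : HasBetterNeighbor n f (a m)) {i : ℕ} (hi : i ≤ m) :
    HasBetterNeighbor n f (a i) := by
  induction hi using Nat.decreasingInduction with
  | self => exact hlast
  | of_succ k hk ih =>
    by_contra hopt
    exact hopt (hstay k hk hopt ▸ ih)

theorem lt_of_hasBetterNeighbor_of_greedy (hgrid : ∀ i ≤ m, a i ≤ n)
    (hstep : ∀ i < m, HasBetterNeighbor n f (a i) → f (a (i + 1)) < f (a i))
    (hstay : ∀ i < m, ¬ HasBetterNeighbor n f (a i) → a (i + 1) = a i)
    (hlast : HasBetterNeighbor n f (a m)) : m < n := by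
  have hbetter i (hi : i ≤ m) := hasBetterNeighbor_of_le_of_hasBetterNeighbor hstay hlast hi
  obtain ⟨j, hj, -, hjlt⟩ := hlast
  let c : ℕ → ℕ := fun i => if i ≤ m then a i else j
  have hc : ∀ i ≤ m + 1, c i ≤ n := fun i _ => by
    by_cases h : i ≤ m <;> simp [c, h, hj, hgrid]
  have hdec : ∀ i < m + 1, f (c (i + 1)) < f (c i) := fun i hi => by
    rcases Nat.lt_succ_iff_lt_or_eq.mp hi with hi | rfl
    · simpa [c, hi.le, Nat.succ_le_of_lt hi] using hstep i hi (hbetter i hi.le)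
    · simpa [c] using hjlt
  exact le_of_strictAntiOn_comp_of_mapsTo hc (strictAntiOn_Iic_of_succ_lt hdec)

end GreedyWalk

theorem gotl_reaches_local_optimum_general (n : ℕ)
    (Rk : ℕ → ℝ → ℝ) (α : ℕ → ℕ)
    (hαgrid : ∀ k, α k ≤ n)
    (hstep : ∀ k,
      (∃ j : ℕ, j ≤ n ∧ (j = α k + 1 ∨ j + 1 = α k) ∧
          Rk k ((j : ℝ) / n) < Rk k ((α k : ℝ) / n)) →
        ((α (k + 1) = α k + 1 ∨ α (k + 1) + 1 = α k) ∧
          Rk k ((α (k + 1) : ℝ) / n) < Rk k ((α k : ℝ) / n)))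
    (hstay : ∀ k,
      (¬ ∃ j : ℕ, j ≤ n ∧ (j = α k + 1 ∨ j + 1 = α k) ∧
          Rk k ((j : ℝ) / n) < Rk k ((α k : ℝ) / n)) →
        α (k + 1) = α k)
    (R : ℝ → ℝ) (k₀ : ℕ)
    (hwin : ∀ k, k₀ ≤ k → k < k₀ + n → Rk k = R) :
    ∀ j : ℕ, j ≤ n → (j = α (k₀ + n) + 1 ∨ j + 1 = α (k₀ + n)) →
      ¬ R ((j : ℝ) / n) < R ((α (k₀ + n) : ℝ) / n) := by
  intro j hj hadj hlt
  have hR : ∀ i < n, Rk (k₀ + i) = R := fun i hi => hwin _ (by omega) (by omega)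
  refine lt_irrefl n <| lt_of_hasBetterNeighbor_of_greedy (f := fun i : ℕ => R (i / n))
    (a := fun i => α (k₀ + i)) (m := n) (fun i _ => hαgrid _)
    (fun i hi h => hR i hi ▸ (hstep (k₀ + i) (hR i hi ▸ h)).2)
    (fun i hi h => hstay (k₀ + i) (hR i hi ▸ h)) ⟨j, hj, hadj, hlt⟩

/-- Proposition 1 (constant-objective form): if `α` is a GOTL weight sequence (it moves to
a strictly better adjacent grid index whenever one exists, and stays put otherwise) and the
objective equals `R` throughout the window `{k₀, …, k₀ + n - 1}`, then `α (k₀ + n)` is a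
locally optimal grid index for `R`. -/
theorem gotl_reaches_local_optimum (n : ℕ) (hn : 1 ≤ n)
    (Rk : ℕ → ℝ → ℝ) (α : ℕ → ℕ)
    (hαgrid : ∀ k, α k ≤ n)
    (hstep : ∀ k,
      (∃ j : ℕ, j ≤ n ∧ (j = α k + 1 ∨ j + 1 = α k) ∧
          Rk k ((j : ℝ) / n) < Rk k ((α k : ℝ) / n)) →
        ((α (k + 1) = α k + 1 ∨ α (k + 1) + 1 = α k) ∧
          Rk k ((α (k + 1) : ℝ) / n) < Rk k ((α k : ℝ) / n)))
    (hstay : ∀ k,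
      (¬ ∃ j : ℕ, j ≤ n ∧ (j = α k + 1 ∨ j + 1 = α k) ∧
          Rk k ((j : ℝ) / n) < Rk k ((α k : ℝ) / n)) →
        α (k + 1) = α k)
    (R : ℝ → ℝ) (k₀ : ℕ)
    (hwin : ∀ k, k₀ ≤ k → k < k₀ + n → Rk k = R) :
    ∀ j : ℕ, j ≤ n → (j = α (k₀ + n) + 1 ∨ j + 1 = α (k₀ + n)) →
      ¬ R ((j : ℝ) / n) < R ((α (k₀ + n) : ℝ) / n) :=
  gotl_reaches_local_optimum_general n Rk α hαgrid hstep hstay R k₀ hwin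
end

section
/- (Proposition 1 combined with Proposition 2: convergence to the unique minimizer.) Let R_k : ℝ → ℝ be convex for each k, and suppose there is a grid index i* such that for every k ∈ {k₀, k₀+1, …, k₀+n-1}, R_k(i*/n) < R_k(j/n) for all grid indices j ≠ i* (the unique grid minimizer is the same throughout the window). Then any GOTL weight sequence α satisfies α_{k₀+n} = i*. -/
/-!
Along the grid, a convex function with strict grid minimizer `i*` strictly decreases towards `i*`
from either side. Hence, away from `i*`, the neighbour one step closer to `i*` is a better reply,
and every better reply lies closer to `i*`; at `i*` there is no better reply. So during the window
each GOTL step lowers the distance `|α_k - i*| ≤ n` by one until it vanishes, and then keeps it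
at zero.
-/

open Set

lemma ConvexOn.lt_of_lt_of_between {f : ℝ → ℝ} (hf : ConvexOn ℝ univ f) {x y z : ℝ}
    (hy : x < y ∧ y < z ∨ z < y ∧ y < x) (h : f x < f y) : f y < f z := by
  have hxz : x ≠ z := by rcases hy with hy | hy <;> linarith [hy.1, hy.2]
  have hmem : y ∈ openSegment ℝ x z := by
    rw [openSegment_eq_Ioo' hxz]
    rcases hy with ⟨h₁, h₂⟩ | ⟨h₁, h₂⟩
    · exact ⟨by simp [h₁], by simp [h₂]⟩
    · exact ⟨by simp [h₁], by simp [h₂]⟩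
  exact hf.lt_right_of_left_lt (mem_univ x) (mem_univ z) hmem h

lemma ConvexOn.grid_lt_of_lt_of_between {f : ℝ → ℝ} (hf : ConvexOn ℝ univ f) {n a b c : ℕ}
    (hn : 1 ≤ n) (hb : a < b ∧ b < c ∨ c < b ∧ b < a) (h : f (a / n) < f (b / n)) :
    f (b / n) < f (c / n) := by
  have hdiv : StrictMono fun m : ℕ ↦ (m : ℝ) / n := fun _ _ hlt ↦
    div_lt_div_of_pos_right (Nat.cast_lt.mpr hlt) (by exact_mod_cast hn)
  refine hf.lt_of_lt_of_between ?_ h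
  rcases hb with ⟨h₁, h₂⟩ | ⟨h₁, h₂⟩
  · exact Or.inl ⟨hdiv h₁, hdiv h₂⟩
  · exact Or.inr ⟨hdiv h₁, hdiv h₂⟩

/-- Together with `j ≤ n`, this is membership of `j` in the better-reply set `B_R(i)`. -/
def IsBetterReply (R : ℝ → ℝ) (n i j : ℕ) : Prop :=
  (j = i + 1 ∨ j + 1 = i) ∧ R (j / n) < R (i / n)

def IsStrictGridMin (R : ℝ → ℝ) (n i : ℕ) : Prop :=
  ∀ j ≤ n, j ≠ i → R (i / n) < R (j / n)

namespace IsStrictGridMin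

variable {R : ℝ → ℝ} {n istar : ℕ}

lemma not_isBetterReply (hmin : IsStrictGridMin R n istar) {j : ℕ} (hj : j ≤ n) :
    ¬ IsBetterReply R n istar j := by
  rintro ⟨hadj, hlt⟩
  exact (hmin j hj (by omega)).not_gt hlt

lemma exists_isBetterReply (hR : ConvexOn ℝ univ R) (hn : 1 ≤ n)
    (hmin : IsStrictGridMin R n istar) (histar : istar ≤ n) {i : ℕ} (hi : i ≤ n)
    (hne : i ≠ istar) : ∃ j ≤ n, IsBetterReply R n i j := by
  -- the neighbour towards `istar`, which is better than `i` either because it is `istar`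
  -- or because it lies strictly between `istar` and `i`
  obtain ⟨j, hj, hadj, hcloser⟩ : ∃ j ≤ n, (j = i + 1 ∨ j + 1 = i) ∧
      (j = istar ∨ istar < j ∧ j < i ∨ i < j ∧ j < istar) := by
    rcases Nat.lt_or_gt_of_ne hne with h | h
    · exact ⟨i + 1, by omega, Or.inl rfl, by omega⟩
    · exact ⟨i - 1, by omega, Or.inr (by omega), by omega⟩
  refine ⟨j, hj, hadj, ?_⟩
  rcases hcloser with rfl | hbetween
  · exact hmin i hi hne
  · exact hR.grid_lt_of_lt_of_between hn hbetween (hmin j hj (by omega))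

lemma dist_lt_of_isBetterReply (hR : ConvexOn ℝ univ R) (hn : 1 ≤ n)
    (hmin : IsStrictGridMin R n istar) {i j : ℕ} (hi : i ≤ n) (hj : j ≤ n)
    (hij : IsBetterReply R n i j) : Nat.dist j istar < Nat.dist i istar := by
  by_cases hne : i = istar
  · exact absurd hij (hne ▸ hmin.not_isBetterReply hj)
  -- otherwise `i` would lie strictly between `istar` and the better reply `j`
  by_contra! hfar
  have hbetween : istar < i ∧ i < j ∨ j < i ∧ i < istar := by
    unfold Nat.dist at hfar; rcases hij.1 with h | h <;> omega
  exact (hR.grid_lt_of_lt_of_between hn hbetween (hmin i hi hne)).not_gt hij.2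

lemma dist_step_le (hR : ConvexOn ℝ univ R) (hn : 1 ≤ n) (hmin : IsStrictGridMin R n istar)
    (histar : istar ≤ n) {i i' : ℕ} (hi : i ≤ n) (hi' : i' ≤ n)
    (hstep : (∃ j ≤ n, IsBetterReply R n i j) → IsBetterReply R n i i')
    (hstay : (¬ ∃ j ≤ n, IsBetterReply R n i j) → i' = i) :
    Nat.dist i' istar ≤ Nat.dist i istar - 1 := by
  by_cases hne : i = istar
  · subst hne
    rw [hstay fun ⟨j, hj, hij⟩ ↦ hmin.not_isBetterReply hj hij, Nat.dist_self]
  · have := hmin.dist_lt_of_isBetterReply hR hn hi hi'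
      (hstep (hmin.exists_isBetterReply hR hn histar hi hne))
    omega

end IsStrictGridMin

lemma Nat.eq_zero_of_le_of_forall_succ_le_pred {d : ℕ → ℕ} {n : ℕ} (h0 : d 0 ≤ n)
    (hd : ∀ m < n, d (m + 1) ≤ d m - 1) : d n = 0 := by
  suffices ∀ m ≤ n, d m ≤ n - m by simpa using this n le_rfl
  intro m
  induction m with
  | zero => simpa using h0
  | succ m ih =>
    intro hm
    have := hd m hm
    have := ih (by omega)
    omega

/-- Propositions 1 and 2 combined: if each objective `Rk k` is convex and throughout the
window `{k₀, …, k₀ + n - 1}` the grid index `i*` is the unique grid minimizer of `Rk k`,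
then any GOTL weight sequence satisfies `α (k₀ + n) = i*`. -/
theorem gotl_converges_to_unique_minimizer (n : ℕ) (hn : 1 ≤ n)
    (Rk : ℕ → ℝ → ℝ) (hconv : ∀ k, ConvexOn ℝ Set.univ (Rk k))
    (α : ℕ → ℕ)
    (hαgrid : ∀ k, α k ≤ n)
    (hstep : ∀ k,
      (∃ j : ℕ, j ≤ n ∧ (j = α k + 1 ∨ j + 1 = α k) ∧
          Rk k ((j : ℝ) / n) < Rk k ((α k : ℝ) / n)) →
        ((α (k + 1) = α k + 1 ∨ α (k + 1) + 1 = α k) ∧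
          Rk k ((α (k + 1) : ℝ) / n) < Rk k ((α k : ℝ) / n)))
    (hstay : ∀ k,
      (¬ ∃ j : ℕ, j ≤ n ∧ (j = α k + 1 ∨ j + 1 = α k) ∧
          Rk k ((j : ℝ) / n) < Rk k ((α k : ℝ) / n)) →
        α (k + 1) = α k)
    (istar : ℕ) (histar : istar ≤ n) (k₀ : ℕ)
    (hmin : ∀ k, k₀ ≤ k → k < k₀ + n →
      ∀ j : ℕ, j ≤ n → j ≠ istar → Rk k ((istar : ℝ) / n) < Rk k ((j : ℝ) / n)) :
    α (k₀ + n) = istar := by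
  have hdist : Nat.dist (α (k₀ + n)) istar = 0 := by
    refine Nat.eq_zero_of_le_of_forall_succ_le_pred (d := fun m ↦ Nat.dist (α (k₀ + m)) istar)
      ?_ fun m hm ↦ ?_
    · have := hαgrid k₀
      simp only [Nat.dist, add_zero]
      omega
    · exact IsStrictGridMin.dist_step_le (hconv _) hn (hmin (k₀ + m) (by omega) (by omega))
        histar (hαgrid _) (hαgrid _) (hstep _) (hstay _)
  exact Nat.eq_of_dist_eq_zero hdist
end

section
/- (Negative product bias with equally accurate predictors.) If w t > 0 for all t, ∑_t w t * (a t)^2 = ∑_t w t * (b t)^2 > 0, and ∑_t w t * a t * b t < 0, then there exists α ∈ (0,1) with R(α) < min(R(0), R(1)); i.e., a strictly combined predictor strictly outperforms both the target and the source predictor even though each performs equally well on its own. -/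
/-! The error `R` is a quadratic in `α` whose coefficients are the two squared errors and the
product bias. At the midpoint, with equal squared errors `A`, it equals `(A + ∑ w a b) / 2`,
which is below `A = R 0 = R 1` as soon as the product bias is negative. -/

open Finset

theorem sum_mul_lineMap_sq {ι : Type*} (s : Finset ι) (w a b : ι → ℝ) (α : ℝ) :
    ∑ t ∈ s, w t * ((1 - α) * a t + α * b t) ^ 2 =
      (1 - α) ^ 2 * ∑ t ∈ s, w t * a t ^ 2 + 2 * α * (1 - α) * ∑ t ∈ s, w t * a t * b t +
        α ^ 2 * ∑ t ∈ s, w t * b t ^ 2 := by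
  simp only [mul_sum, ← sum_add_distrib]
  exact sum_congr rfl fun t _ => by ring

theorem gotl_combined_beats_both_general (N : ℕ)
    (w a b : Fin N → ℝ)
    (R : ℝ → ℝ)
    (hR : ∀ α : ℝ, R α = ∑ t, w t * ((1 - α) * a t + α * b t) ^ 2)
    (heq : ∑ t, w t * (a t) ^ 2 = ∑ t, w t * (b t) ^ 2)
    (hpos : 0 < ∑ t, w t * (a t) ^ 2)
    (hbias : ∑ t, w t * a t * b t < 0) :
    ∃ α : ℝ, α ∈ Set.Ioo (0 : ℝ) 1 ∧ R α < min (R 0) (R 1) := by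
  refine ⟨1 / 2, by norm_num, ?_⟩
  simp only [hR, sum_mul_lineMap_sq, ← heq]
  norm_num
  linarith

/-- Negative product bias with equally accurate predictors: if the target and source
predictors have equal positive weighted squared errors and negative product bias, then
some strictly combined predictor strictly outperforms both of them. -/
theorem gotl_combined_beats_both (N : ℕ) (hN : 1 ≤ N)
    (w a b : Fin N → ℝ) (hw : ∀ t, 0 < w t)
    (R : ℝ → ℝ)
    (hR : ∀ α : ℝ, R α = ∑ t, w t * ((1 - α) * a t + α * b t) ^ 2)
    (heq : ∑ t, w t * (a t) ^ 2 = ∑ t, w t * (b t) ^ 2)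
    (hpos : 0 < ∑ t, w t * (a t) ^ 2)
    (hbias : ∑ t, w t * a t * b t < 0) :
    ∃ α : ℝ, α ∈ Set.Ioo (0 : ℝ) 1 ∧ R α < min (R 0) (R 1) :=
  gotl_combined_beats_both_general N w a b R hR heq hpos hbias
end

section
/- Assume w t > 0 for all t and a t₀ ≠ b t₀ for some t₀, and let α* = (∑_t w t * a t * (a t - b t)) / (∑_t w t * (a t - b t)^2) be the unique minimizer of R over ℝ. Then α* ∈ (0,1) if and only if ∑_t w t * a t * b t < ∑_t w t * (a t)^2 and ∑_t w t * a t * b t < ∑_t w t * (b t)^2; and in that case R(α*) < min(R(0), R(1)). -/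
/-!
Expanding the square, `R α = R 0 - 2 α T + α² S` with `T = ∑ w a (a - b)` and
`S = ∑ w (a - b)² > 0`, so `α* = T / S` is the vertex of this parabola. Since
`R 0 - ∑ w a b = T` and `R 1 - ∑ w a b = S - T`, the two conditions say exactly `0 < T < S`,
i.e. `α* ∈ (0, 1)`. The vertex value is `R 0 - T² / S`, which lies below `R 0` by `T² / S`
and below `R 1` by `(S - T)² / S`.
-/

open Finset

section WeightedSums

variable {ι : Type*} [Fintype ι] (w a b : ι → ℝ)

theorem sum_mul_combination_sq (α : ℝ) :
    ∑ t, w t * ((1 - α) * a t + α * b t) ^ 2 =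
      ∑ t, w t * a t ^ 2 - 2 * α * ∑ t, w t * a t * (a t - b t)
        + α ^ 2 * ∑ t, w t * (a t - b t) ^ 2 := by
  simp only [mul_sum, ← sum_sub_distrib, ← sum_add_distrib]
  exact sum_congr rfl fun t _ => by ring

theorem sum_mul_sq_sub_sum_mul_mul :
    ∑ t, w t * a t ^ 2 - ∑ t, w t * a t * b t = ∑ t, w t * a t * (a t - b t) := by
  rw [← sum_sub_distrib]
  exact sum_congr rfl fun t _ => by ring

theorem sum_mul_sq_right_sub_sum_mul_mul :
    ∑ t, w t * b t ^ 2 - ∑ t, w t * a t * b t =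
      ∑ t, w t * (a t - b t) ^ 2 - ∑ t, w t * a t * (a t - b t) := by
  simp only [← sum_sub_distrib]
  exact sum_congr rfl fun t _ => by ring

variable {w a b} in
theorem sum_mul_sub_sq_pos (hw : ∀ t, 0 < w t) {t₀ : ι} (hab : a t₀ ≠ b t₀) :
    0 < ∑ t, w t * (a t - b t) ^ 2 :=
  sum_pos' (fun t _ => mul_nonneg (hw t).le (sq_nonneg _))
    ⟨t₀, mem_univ _, mul_pos (hw t₀) ((sq_pos_of_ne_zero (sub_ne_zero.mpr hab)))⟩

end WeightedSums

section Parabola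

variable {c T S : ℝ}

theorem div_mem_Ioo_zero_one_iff (hS : 0 < S) : T / S ∈ Set.Ioo 0 1 ↔ 0 < T ∧ T < S := by
  rw [Set.mem_Ioo, div_pos_iff_of_pos_right hS, div_lt_one hS]

theorem parabola_at_vertex (hS : S ≠ 0) :
    c - 2 * (T / S) * T + (T / S) ^ 2 * S = c - T ^ 2 / S := by
  field_simp
  ring

theorem parabola_at_vertex_lt_min (hT : 0 < T) (hTS : T < S) :
    c - 2 * (T / S) * T + (T / S) ^ 2 * S < min c (c - 2 * 1 * T + 1 ^ 2 * S) := by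
  have hS : 0 < S := hT.trans hTS
  have gap_one : c - 2 * 1 * T + 1 ^ 2 * S - (c - T ^ 2 / S) = (S - T) ^ 2 / S := by
    field_simp
    ring
  have : 0 < (S - T) ^ 2 / S := div_pos (pow_pos (sub_pos.mpr hTS) 2) hS
  rw [parabola_at_vertex hS.ne', lt_min_iff]
  exact ⟨sub_lt_self c (by positivity), by linarith⟩

end Parabola

theorem gotl_interior_minimizer_iff_general (N : ℕ)
    (w a b : Fin N → ℝ) (hw : ∀ t, 0 < w t)
    (t₀ : Fin N) (hab : a t₀ ≠ b t₀)
    (R : ℝ → ℝ)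
    (hR : ∀ α : ℝ, R α = ∑ t, w t * ((1 - α) * a t + α * b t) ^ 2)
    (αstar : ℝ)
    (hαstar : αstar =
      (∑ t, w t * a t * (a t - b t)) / (∑ t, w t * (a t - b t) ^ 2)) :
    (αstar ∈ Set.Ioo (0 : ℝ) 1 ↔
      (∑ t, w t * a t * b t < ∑ t, w t * (a t) ^ 2 ∧
       ∑ t, w t * a t * b t < ∑ t, w t * (b t) ^ 2)) ∧
    (αstar ∈ Set.Ioo (0 : ℝ) 1 → R αstar < min (R 0) (R 1)) := by
  have hS := sum_mul_sub_sq_pos hw hab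
  have hA := sum_mul_sq_sub_sum_mul_mul w a b
  have hB := sum_mul_sq_right_sub_sum_mul_mul w a b
  subst hαstar
  rw [div_mem_Ioo_zero_one_iff hS]
  constructor
  · constructor <;> rintro ⟨h₁, h₂⟩ <;> constructor <;> linarith
  · rintro ⟨hT, hTS⟩
    simp only [hR, sum_mul_combination_sq w a b]
    simpa using parabola_at_vertex_lt_min hT hTS

/-- The unique minimizer `α*` of the GOTL objective lies in `(0,1)` if and only if the
weighted product bias `∑ t, w t * a t * b t` is smaller than both `∑ t, w t * (a t)^2`
and `∑ t, w t * (b t)^2`; and in that case the combined predictor at `α*` strictly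
outperforms both the target (`α = 0`) and source (`α = 1`) predictors. -/
theorem gotl_interior_minimizer_iff (N : ℕ) (hN : 1 ≤ N)
    (w a b : Fin N → ℝ) (hw : ∀ t, 0 < w t)
    (t₀ : Fin N) (hab : a t₀ ≠ b t₀)
    (R : ℝ → ℝ)
    (hR : ∀ α : ℝ, R α = ∑ t, w t * ((1 - α) * a t + α * b t) ^ 2)
    (αstar : ℝ)
    (hαstar : αstar =
      (∑ t, w t * a t * (a t - b t)) / (∑ t, w t * (a t - b t) ^ 2)) :
    (αstar ∈ Set.Ioo (0 : ℝ) 1 ↔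
      (∑ t, w t * a t * b t < ∑ t, w t * (a t) ^ 2 ∧
       ∑ t, w t * a t * b t < ∑ t, w t * (b t) ^ 2)) ∧
    (αstar ∈ Set.Ioo (0 : ℝ) 1 → R αstar < min (R 0) (R 1)) :=
  gotl_interior_minimizer_iff_general N w a b hw t₀ hab R hR αstar hαstar
end
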